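/- arXiv:1207.1659 — 5 statements merged into one kernel-verified Lean document; each statement's English description precedes it below -/
import Mathlib

section
/- A finitely supported probability distribution p on ℕ is log-concave (its support is an interval and p(i)·p(i+2) ≤ p(i+1)² for all i) if and only if p ≤_{lr↑} p. -/
/-- `p` is a finitely supported probability distribution on ℕ. -/
def IsDist (p : ℕ → ℝ) : Prop :=
  (∀ x, 0 ≤ p x) ∧ (Function.support p).Finite ∧ ∑' x, p x = 1

/-- Upshifted likelihood-ratio order. -/
def LRup (p q : ℕ → ℝ) : Prop :=
  ∀ i k l : ℕ, p (i + k + l) * q i ≤ p (i + l) * q (i + k)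

/-- The support of `p` is an interval of ℕ. -/
def SuppInterval (p : ℕ → ℝ) : Prop :=
  ∀ i j k : ℕ, i ≤ j → j ≤ k → p i ≠ 0 → p k ≠ 0 → p j ≠ 0

/-- `p` is log-concave. -/
def LogConcave (p : ℕ → ℝ) : Prop :=
  SuppInterval p ∧ ∀ i : ℕ, p i * p (i + 2) ≤ p (i + 1) ^ 2

theorem logConcave_iff_lru_self (p : ℕ → ℝ) (hp : IsDist p) :
    LogConcave p ↔ LRup p p := by
  obtain ⟨hnn, -, -⟩ := hp
  constructor
  · rintro ⟨hint, hlc⟩ i k l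
    by_cases hi : p i = 0
    · rw [hi, mul_zero]
      exact mul_nonneg (hnn _) (hnn _)
    by_cases hikl : p (i + k + l) = 0
    · rw [hikl, zero_mul]
      exact mul_nonneg (hnn _) (hnn _)
    have pos : ∀ m, i ≤ m → m ≤ i + k + l → 0 < p m := fun m h1 h2 =>
      (hnn m).lt_of_ne (fun h => hint i m (i + k + l) h1 h2 hi hikl h.symm)
    have ratio : ∀ a b, i ≤ a → a ≤ b → b + 1 ≤ i + k + l →
        p a * p (b + 1) ≤ p (a + 1) * p b := by
      intro a b ha hab
      induction b, hab using Nat.le_induction with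
      | base => intro _; exact (mul_comm (p a) (p (a + 1))).le
      | succ b hab ih =>
        intro hb
        have h1 := ih (by omega)
        have h2 := hlc b
        have pb := pos b (by omega) (by omega)
        have pb1 := pos (b + 1) (by omega) (by omega)
        have pa := hnn a
        have pb2 := hnn (b + 2)
        have key1 : p a * (p b * p (b + 2)) ≤ p a * p (b + 1) ^ 2 :=
          mul_le_mul_of_nonneg_left h2 pa
        have key2 : p a * p (b + 1) * p (b + 1) ≤ p (a + 1) * p b * p (b + 1) :=
          mul_le_mul_of_nonneg_right h1 pb1.le
        have : p b * (p a * p (b + 2)) ≤ p b * (p (a + 1) * p (b + 1)) := by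
          nlinarith
        have := le_of_mul_le_mul_left this pb
        simpa using this
    have claim : ∀ l', l' ≤ l → p (i + k + l') * p i ≤ p (i + l') * p (i + k) := by
      intro l'
      induction l' with
      | zero => intro _; simp [mul_comm]
      | succ l' ih =>
        intro hl
        have ihh := ih (by omega)
        have h1 := ratio (i + l') (i + k + l') (by omega) (by omega) (by omega)
        have pil := pos (i + l') (by omega) (by omega)
        have pil1 := hnn (i + l' + 1)
        have piv := hnn i
        have e1 : i + k + (l' + 1) = (i + k + l') + 1 := by omega
        have e2 : i + (l' + 1) = (i + l') + 1 := by omega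
        rw [e1, e2]
        have key1 : p (i + l') * p (i + k + l' + 1) * p i ≤
            p (i + l' + 1) * p (i + k + l') * p i :=
          mul_le_mul_of_nonneg_right h1 piv
        have key2 : p (i + l' + 1) * (p (i + k + l') * p i) ≤
            p (i + l' + 1) * (p (i + l') * p (i + k)) :=
          mul_le_mul_of_nonneg_left ihh pil1
        have h3 : p (i + l') * (p (i + k + l' + 1) * p i) ≤
            p (i + l') * (p (i + l' + 1) * p (i + k)) := by nlinarith
        exact le_of_mul_le_mul_left h3 pil
    exact claim l le_rfl
  · intro h
    constructor
    · intro a b c hab hbc ha hc hb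
      have key := h a (c - b) (b - a)
      have e1 : a + (c - b) + (b - a) = c := by omega
      have e2 : a + (b - a) = b := by omega
      rw [e1, e2, hb, zero_mul] at key
      have hca : 0 < p c * p a :=
        mul_pos ((hnn c).lt_of_ne (Ne.symm hc)) ((hnn a).lt_of_ne (Ne.symm ha))
      linarith
    · intro i
      have := h i 1 1
      nlinarith [this]
end

section
/- The convolution of two log-concave finitely supported probability distributions on ℕ is log-concave. -/
/-- Convolution of distributions on ℕ. -/
def conv (p q : ℕ → ℝ) (x : ℕ) : ℝ :=
  ∑ y ∈ Finset.range (x + 1), p y * q (x - y)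

/-- The PF₂ "cross" inequality from log-concavity with interval support. -/
lemma cross (p : ℕ → ℝ) (hp0 : ∀ x, 0 ≤ p x) (hsi : SuppInterval p)
    (hlc : ∀ i : ℕ, p i * p (i + 2) ≤ p (i + 1) ^ 2) :
    ∀ i j : ℕ, i ≤ j → p i * p (j + 1) ≤ p (i + 1) * p j := by
  intro i j hij
  induction j, hij using Nat.le_induction with
  | base => linarith [mul_comm (p i) (p (i + 1))]
  | succ j hij ih =>
    by_cases hj : p j = 0
    · have h1 : p i = 0 ∨ p (j + 1 + 1) = 0 := by
        by_contra h
        push_neg at h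
        exact hsi i j (j + 2) hij (by omega) h.1 h.2 hj
      have h2 : 0 ≤ p (i + 1) * p (j + 1) := mul_nonneg (hp0 _) (hp0 _)
      rcases h1 with h | h <;> rw [h] <;> simpa using h2
    · have hjpos : 0 < p j := lt_of_le_of_ne (hp0 j) (Ne.symm hj)
      have hA := mul_le_mul_of_nonneg_left (hlc j) (hp0 i)
      have hB := mul_le_mul_of_nonneg_right ih (hp0 (j + 1))
      nlinarith [hA, hB, hjpos, hp0 i, hp0 (j + 1)]

/-- Cauchy–Binet identity for 2×2 minors. -/
lemma cb (a b u v : ℕ → ℝ) (N : ℕ) :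
    (∑ k ∈ Finset.range N, a k * u k) * (∑ k ∈ Finset.range N, b k * v k)
      - (∑ k ∈ Finset.range N, a k * v k) * (∑ k ∈ Finset.range N, b k * u k)
    = ∑ l ∈ Finset.range N, ∑ k ∈ Finset.range l,
        (a k * b l - a l * b k) * (u k * v l - u l * v k) := by
  induction N with
  | zero => simp
  | succ N ih =>
    rw [Finset.sum_range_succ (f := fun k => a k * u k),
        Finset.sum_range_succ (f := fun k => b k * v k),
        Finset.sum_range_succ (f := fun k => a k * v k),
        Finset.sum_range_succ (f := fun k => b k * u k),
        Finset.sum_range_succ (f := fun l => ∑ k ∈ Finset.range l,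
          (a k * b l - a l * b k) * (u k * v l - u l * v k))]
    have expand : ∑ k ∈ Finset.range N, (a k * b N - a N * b k) * (u k * v N - u N * v k)
        = b N * v N * (∑ k ∈ Finset.range N, a k * u k)
          - b N * u N * (∑ k ∈ Finset.range N, a k * v k)
          - a N * v N * (∑ k ∈ Finset.range N, b k * u k)
          + a N * u N * (∑ k ∈ Finset.range N, b k * v k) := by
      rw [Finset.mul_sum, Finset.mul_sum, Finset.mul_sum, Finset.mul_sum,
          ← Finset.sum_sub_distrib, ← Finset.sum_sub_distrib, ← Finset.sum_add_distrib]
      exact Finset.sum_congr rfl fun k _ => by ring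
    rw [expand, ← ih]
    ring

theorem logConcave_conv (p q : ℕ → ℝ) (hp : IsDist p) (hq : IsDist q)
    (hlp : LogConcave p) (hlq : LogConcave q) :
    LogConcave (conv p q) := by
  obtain ⟨hp0, -, -⟩ := hp
  obtain ⟨hq0, -, -⟩ := hq
  obtain ⟨hpsi, hplc⟩ := hlp
  obtain ⟨hqsi, hqlc⟩ := hlq
  have hconv0 : ∀ x y, 0 ≤ p y * q (x - y) := fun x y => mul_nonneg (hp0 y) (hq0 _)
  have hpos : ∀ x, conv p q x ≠ 0 → ∃ y, y ≤ x ∧ p y ≠ 0 ∧ q (x - y) ≠ 0 := by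
    intro x hx
    by_contra h
    push_neg at h
    apply hx
    apply Finset.sum_eq_zero
    intro y hy
    rw [Finset.mem_range, Nat.lt_succ_iff] at hy
    by_cases hpy : p y = 0
    · rw [hpy, zero_mul]
    · rw [h y hy hpy, mul_zero]
  constructor
  · -- interval support
    intro i j k hij hjk hi hk
    obtain ⟨y, hyi, hpy, hqy⟩ := hpos i hi
    obtain ⟨z, hzk, hpz, hqz⟩ := hpos k hk
    set s := i - y with hs
    set t := k - z with ht
    have hys : y + s = i := by omega
    have hzt : z + t = k := by omega
    set w := max (min y z) (j - max s t) with hw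
    have hw1 : min y z ≤ w := le_max_left _ _
    have hw2 : w ≤ max y z := by omega
    have hw3 : w ≤ j := by omega
    have hw4 : min s t ≤ j - w := by omega
    have hw5 : j - w ≤ max s t := by omega
    have hpw : p w ≠ 0 := by
      rcases le_total y z with hyz | hyz
      · exact hpsi y w z (by omega) (by omega) hpy hpz
      · exact hpsi z w y (by omega) (by omega) hpz hpy
    have hqw : q (j - w) ≠ 0 := by
      rcases le_total s t with hst | hst
      · exact hqsi s (j - w) t (by omega) (by omega) hqy hqz
      · exact hqsi t (j - w) s (by omega) (by omega) hqz hqy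
    have hle : p w * q (j - w) ≤ conv p q j := by
      apply Finset.single_le_sum (f := fun y => p y * q (j - y)) (fun t _ => hconv0 j t)
      exact Finset.mem_range.2 (by omega)
    have hpwpos : 0 < p w := lt_of_le_of_ne (hp0 w) (Ne.symm hpw)
    have hqwpos : 0 < q (j - w) := lt_of_le_of_ne (hq0 _) (Ne.symm hqw)
    exact ne_of_gt (lt_of_lt_of_le (mul_pos hpwpos hqwpos) hle)
  · -- log-concavity inequality
    intro n
    set u : ℕ → ℝ := fun k => if k ≤ n + 1 then q (n + 1 - k) else 0 with hu
    set v : ℕ → ℝ := fun k => if k ≤ n + 2 then q (n + 2 - k) else 0 with hv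
    set b : ℕ → ℝ := fun k => if 1 ≤ k then p (k - 1) else 0 with hb
    have hu0 : ∀ k, 0 ≤ u k := by
      intro k; by_cases h : k ≤ n + 1 <;> simp [hu, h, hq0]
    have hv0 : ∀ k, 0 ≤ v k := by
      intro k; by_cases h : k ≤ n + 2 <;> simp [hv, h, hq0]
    have hb0 : ∀ k, 0 ≤ b k := by
      intro k; by_cases h : 1 ≤ k <;> simp [hb, h, hp0]
    have h1 : ∑ k ∈ Finset.range (n + 3), p k * u k = conv p q (n + 1) := by
      rw [show n + 3 = (n + 2) + 1 from rfl, Finset.sum_range_succ]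
      have : u (n + 2) = 0 := if_neg (by omega)
      rw [this, mul_zero, add_zero, conv]
      exact Finset.sum_congr rfl fun k hk => by
        rw [Finset.mem_range] at hk
        simp only [hu, if_pos (by omega : k ≤ n + 1)]
    have h2 : ∑ k ∈ Finset.range (n + 3), p k * v k = conv p q (n + 2) := by
      rw [conv]
      exact Finset.sum_congr rfl fun k hk => by
        rw [Finset.mem_range] at hk
        simp only [hv, if_pos (by omega : k ≤ n + 2)]
    have h3 : ∑ k ∈ Finset.range (n + 3), b k * u k = conv p q n := by
      rw [show n + 3 = (n + 2) + 1 from rfl, Finset.sum_range_succ']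
      have hb00 : b 0 * u 0 = 0 := by simp [hb]
      rw [hb00, add_zero, Finset.sum_range_succ]
      have hun2 : u ((n + 1) + 1) = 0 := if_neg (by omega)
      rw [hun2, mul_zero, add_zero, conv]
      exact Finset.sum_congr rfl fun k hk => by
        rw [Finset.mem_range] at hk
        simp only [hb, hu, if_pos (by omega : 1 ≤ k + 1), if_pos (by omega : k + 1 ≤ n + 1)]
        congr 2 <;> omega
    have h4 : ∑ k ∈ Finset.range (n + 3), b k * v k = conv p q (n + 1) := by
      rw [show n + 3 = (n + 2) + 1 from rfl, Finset.sum_range_succ']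
      have hb00 : b 0 * v 0 = 0 := by simp [hb]
      rw [hb00, add_zero, conv]
      exact Finset.sum_congr rfl fun k hk => by
        rw [Finset.mem_range] at hk
        simp only [hb, hv, if_pos (by omega : 1 ≤ k + 1), if_pos (by omega : k + 1 ≤ n + 2)]
        congr 2 <;> omega
    have key := cb p b u v (n + 3)
    rw [h1, h2, h3, h4] at key
    have hsum : 0 ≤ ∑ l ∈ Finset.range (n + 3), ∑ k ∈ Finset.range l,
        (p k * b l - p l * b k) * (u k * v l - u l * v k) := by
      apply Finset.sum_nonneg
      intro l hl
      apply Finset.sum_nonneg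
      intro k hk
      rw [Finset.mem_range] at hl hk
      have hfac1 : 0 ≤ p k * b l - p l * b k := by
        rcases Nat.eq_zero_or_pos k with rfl | hkpos
        · have : b 0 = 0 := if_neg (by omega)
          rw [this, mul_zero, sub_zero]
          exact mul_nonneg (hp0 0) (hb0 l)
        · obtain ⟨k', rfl⟩ : ∃ k', k = k' + 1 := ⟨k - 1, by omega⟩
          obtain ⟨m, rfl⟩ : ∃ m, l = m + 1 := ⟨l - 1, by omega⟩
          have hbl : b (m + 1) = p m := by simp [hb]
          have hbk : b (k' + 1) = p k' := by simp [hb]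
          rw [hbl, hbk]
          have := cross p hp0 hpsi hplc k' m (by omega)
          nlinarith [this]
      have hfac2 : 0 ≤ u k * v l - u l * v k := by
        by_cases hl1 : l ≤ n + 1
        · have euk : u k = q (n + 1 - k) := if_pos (by omega)
          have eul : u l = q (n + 1 - l) := if_pos hl1
          have evk : v k = q (n + 2 - k) := if_pos (by omega)
          have evl : v l = q (n + 2 - l) := if_pos (by omega)
          rw [euk, eul, evk, evl]
          have e1 : n + 2 - k = (n + 1 - k) + 1 := by omega
          have e2 : n + 2 - l = (n + 1 - l) + 1 := by omega
          rw [e1, e2]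
          have := cross q hq0 hqsi hqlc (n + 1 - l) (n + 1 - k) (by omega)
          nlinarith [this]
        · have eul : u l = 0 := if_neg hl1
          rw [eul, zero_mul, sub_zero]
          exact mul_nonneg (hu0 k) (hv0 l)
      exact mul_nonneg hfac1 hfac2
    rw [sq]
    linarith [key, hsum]
end

section
/- Let →e be a directed edge outgoing from v with edge capacity c and vertex capacity b, and let m be a collection of finitely supported probability distributions with 0 in their support, indexed by the other edges incoming to v. Define R[m](x) = 1(x ≤ c)·Σ_{|y| ≤ b−x} Π_i m_i(y_i) / Σ_{t ≤ c} Σ_{|y| ≤ b−t} Π_i m_i(y_i). Then R[m] equals the reweighting by δ_{[0,c]} of the shifted reversal (with shift b) of the convolution δ_{[0,b]} ∗ (∗_i m_i): R[m] = δ_{[0,c]}·(δ_{[0,b]} ∗ (∗_i m_i))^R. -/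
/-- Shifted reversal with shift `b`. -/
def srev (b : ℕ) (p : ℕ → ℝ) (x : ℕ) : ℝ :=
  if x ≤ b then p (b - x) else 0

/-- Reweighting of `q` by `p`: the normalized pointwise product. -/
noncomputable def reweight (p q : ℕ → ℝ) (x : ℕ) : ℝ :=
  p x * q x / ∑' y, p y * q y

/-- The indicator vector of `{0, ..., b}`. -/
def ind (b : ℕ) (x : ℕ) : ℝ := if x ≤ b then 1 else 0

/-- Convolution of a finite family of distributions on ℕ. -/
noncomputable def famConv {ι : Type*} [Fintype ι] (m : ι → ℕ → ℝ) (s : ℕ) : ℝ :=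
  ∑' y : ι → ℕ, if (∑ i, y i) = s then ∏ i, m i (y i) else 0

/-- Numerator of the BP operator: total mass of configurations `y` with
`|y| ≤ b - x`. -/
noncomputable def Rnum {ι : Type*} [Fintype ι] (b : ℕ) (m : ι → ℕ → ℝ) (x : ℕ) : ℝ :=
  ∑' y : ι → ℕ, if (∑ i, y i) + x ≤ b then ∏ i, m i (y i) else 0

/-- The local BP operator with vertex capacity `b` and edge capacity `c`. -/
noncomputable def Rop {ι : Type*} [Fintype ι] (b c : ℕ) (m : ι → ℕ → ℝ) (x : ℕ) : ℝ :=
  (if x ≤ c then Rnum b m x else 0) / ∑ t ∈ Finset.range (c + 1), Rnum b m t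

lemma famConv_eq_sum {ι : Type*} [Fintype ι] [DecidableEq ι] (m : ι → ℕ → ℝ) (s n : ℕ)
    (hsn : s ≤ n) :
    famConv m s = ∑ y ∈ Fintype.piFinset (fun _ : ι => Finset.range (n+1)),
      if (∑ i, y i) = s then ∏ i, m i (y i) else 0 := by
  apply tsum_eq_sum
  intro y hy
  rw [Fintype.mem_piFinset] at hy
  push_neg at hy
  obtain ⟨i, hi⟩ := hy
  rw [Finset.mem_range, not_lt] at hi
  have hle := Finset.single_le_sum (f := y) (fun j _ => Nat.zero_le _) (Finset.mem_univ i)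
  have hne : ¬ ((∑ i, y i) = s) := by omega
  simp [hne]

lemma Rnum_eq {ι : Type*} [Fintype ι] (b : ℕ) (m : ι → ℕ → ℝ) (x : ℕ) :
    Rnum b m x = ∑ s ∈ Finset.range (b+1), if s + x ≤ b then famConv m s else 0 := by
  classical
  have h1 : Rnum b m x = ∑ y ∈ Fintype.piFinset (fun _ : ι => Finset.range (b+1)),
      if (∑ i, y i) + x ≤ b then ∏ i, m i (y i) else 0 := by
    apply tsum_eq_sum
    intro y hy
    rw [Fintype.mem_piFinset] at hy
    push_neg at hy
    obtain ⟨i, hi⟩ := hy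
    rw [Finset.mem_range, not_lt] at hi
    have hle := Finset.single_le_sum (f := y) (fun j _ => Nat.zero_le _) (Finset.mem_univ i)
    have hne : ¬ ((∑ i, y i) + x ≤ b) := by omega
    simp [hne]
  have h2 : ∀ s ∈ Finset.range (b+1), (if s + x ≤ b then famConv m s else 0)
      = ∑ y ∈ Fintype.piFinset (fun _ : ι => Finset.range (b+1)),
        if ((∑ i, y i) = s ∧ s + x ≤ b) then ∏ i, m i (y i) else 0 := by
    intro s hs
    rw [Finset.mem_range] at hs
    by_cases h : s + x ≤ b
    · simp only [h, if_true, and_true]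
      exact famConv_eq_sum m s b (by omega)
    · simp [h]
  have h3 : ∀ y : ι → ℕ,
      ∑ s ∈ Finset.range (b+1),
        (if ((∑ i, y i) = s ∧ s + x ≤ b) then ∏ i, m i (y i) else 0)
      = if (∑ i, y i) + x ≤ b then ∏ i, m i (y i) else 0 := by
    intro y
    by_cases hy : (∑ i, y i) + x ≤ b
    · rw [if_pos hy,
        Finset.sum_eq_single_of_mem (∑ i, y i) (Finset.mem_range.mpr (by omega))]
      · simp [hy]
      · intro s _ hne
        rw [if_neg]
        rintro ⟨hh1, hh2⟩
        exact hne hh1.symm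
    · rw [if_neg hy]
      apply Finset.sum_eq_zero
      intro s _
      rw [if_neg]
      rintro ⟨hh1, hh2⟩
      omega
  rw [h1, Finset.sum_congr rfl h2, Finset.sum_comm]
  exact Finset.sum_congr rfl (fun y _ => (h3 y).symm)

lemma srev_conv_eq {ι : Type*} [Fintype ι] (b : ℕ) (m : ι → ℕ → ℝ) (x : ℕ) :
    srev b (conv (ind b) (famConv m)) x = Rnum b m x := by
  rw [Rnum_eq]
  unfold srev conv ind
  by_cases hx : x ≤ b
  · rw [if_pos hx]
    have key : ∀ y ∈ Finset.range (b - x + 1),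
        (if y ≤ b then (1:ℝ) else 0) * famConv m (b - x - y) = famConv m (b - x - y) := by
      intro y hy
      rw [Finset.mem_range] at hy
      rw [if_pos (by omega), one_mul]
    rw [Finset.sum_congr rfl key]
    have hrefl : ∑ y ∈ Finset.range (b - x + 1), famConv m (b - x - y)
        = ∑ y ∈ Finset.range (b - x + 1), famConv m y := by
      have := Finset.sum_range_reflect (fun j => famConv m j) (b - x + 1)
      simpa using this
    have hR : (∑ s ∈ Finset.range (b+1), if s + x ≤ b then famConv m s else 0)
        = ∑ s ∈ Finset.range (b - x + 1), famConv m s := by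
      rw [← Finset.sum_subset (Finset.range_subset_range.mpr (by omega : b - x + 1 ≤ b + 1))
        (by intro s hs hns
            rw [Finset.mem_range] at hs hns
            rw [if_neg (by omega)])]
      apply Finset.sum_congr rfl
      intro s hs
      rw [Finset.mem_range] at hs
      rw [if_pos (by omega)]
    rw [hrefl, hR]
  · rw [if_neg hx]
    symm
    apply Finset.sum_eq_zero
    intro s _
    rw [if_neg (by omega)]

theorem Rop_eq_reweight_srev_conv {ι : Type*} [Fintype ι] (b c : ℕ)
    (m : ι → ℕ → ℝ) (hdist : ∀ i, IsDist (m i)) (h0 : ∀ i, 0 < m i 0) :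
    ∀ x : ℕ, Rop b c m x = reweight (ind c) (srev b (conv (ind b) (famConv m))) x := by
  intro x
  unfold Rop reweight
  have hden : ∑' y, ind c y * srev b (conv (ind b) (famConv m)) y
      = ∑ t ∈ Finset.range (c+1), Rnum b m t := by
    rw [tsum_eq_sum (s := Finset.range (c+1))
      (by intro y hy
          rw [Finset.mem_range] at hy
          rw [ind, if_neg (by omega), zero_mul])]
    apply Finset.sum_congr rfl
    intro t ht
    rw [Finset.mem_range] at ht
    rw [srev_conv_eq, ind, if_pos (by omega), one_mul]
  rw [hden, srev_conv_eq, ind]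
  by_cases hx : x ≤ c <;> simp [hx]
end

section
/- The local BP operator R is antitone for the upshifted likelihood-ratio order: if m¹ and m² are collections of finitely supported probability distributions on ℕ with 0 in their supports and m¹_i ≤_{lr↑} m²_i for each i, then R[m²] ≤_{lr↑} R[m¹], where R[m](x) = 1(x ≤ c)·Σ_{|y| ≤ b−x} Π_i m_i(y_i) / Σ_{t ≤ c} Σ_{|y| ≤ b−t} Π_i m_i(y_i) for fixed integers b, c ≥ 0. -/
/-!
Let `F(z) = ∑_{|y| ≤ z} ∏ᵢ mᵢ(yᵢ)`, so that `R[m](x)` is proportional to `1(x ≤ c) F(b - x)`.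
The reversal `x ↦ b - x` swaps the two sides of `≤_{lr↑}`, and truncation and normalisation
preserve it, so it suffices that `F¹ ≤_{lr↑} F²`. As `F` is the convolution of the `mᵢ` with the
constant sequence `1`, this follows from the closure of `≤_{lr↑}` under convolution.

Extended by zero to `ℤ`, `p ≤_{lr↑} q` says that `P(x, y) = p(x) q(y)` increases under
`(x, y) ↦ (x - k, y + k)` for `0 ≤ k ≤ x - y`, and convolving the sequences convolves these
functions on `ℤ²`. Split `P = M + J` with `M(x, y) = P(max x y, min x y)`, which is symmetric and
unimodal along antidiagonals, and `J ≥ 0` supported strictly above the diagonal. Convolutions of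
symmetric unimodal functions are again such (by a reflection argument), the mixed terms `M ⋆ J'`
increase termwise, and `J ⋆ J'` vanishes on and below the diagonal.
-/

open Finset PowerSeries

section Quadrant

variable {P Q J K : ℤ → ℤ → ℝ}

def ShiftMono (P : ℤ → ℤ → ℝ) : Prop :=
  ∀ x y k : ℤ, 0 ≤ k → k ≤ x - y → P x y ≤ P (x - k) (y + k)

/-- Symmetric, and nondecreasing towards the diagonal along each antidiagonal `x + y = const`. -/
def AntidiagUnimodal (P : ℤ → ℤ → ℝ) : Prop :=
  ∀ x y x' y' : ℤ, x + y = x' + y' → min x y ≤ min x' y' → P x y ≤ P x' y'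

def QuadrantSupported (P : ℤ → ℤ → ℝ) : Prop :=
  ∀ x y : ℤ, x < 0 ∨ y < 0 → P x y = 0

/-- Convolution on `ℤ²`, written for functions supported in the first quadrant. -/
noncomputable def conv2 (P Q : ℤ → ℤ → ℝ) (X Y : ℤ) : ℝ :=
  ∑ p ∈ Icc 0 X ×ˢ Icc 0 Y, P p.1 p.2 * Q (X - p.1) (Y - p.2)

noncomputable def diagFold (P : ℤ → ℤ → ℝ) (x y : ℤ) : ℝ :=
  P (max x y) (min x y)

theorem ShiftMono.add (hP : ShiftMono P) (hQ : ShiftMono Q) : ShiftMono (P + Q) :=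
  fun x y k hk hkxy => add_le_add (hP x y k hk hkxy) (hQ x y k hk hkxy)

theorem shiftMono_of_eq_zero (hP0 : 0 ≤ P) (hP : ∀ x y, y ≤ x → P x y = 0) : ShiftMono P :=
  fun x y k _ hkxy => (hP x y (by omega)).trans_le (hP0 _ _)

theorem AntidiagUnimodal.symm (hP : AntidiagUnimodal P) (x y : ℤ) : P x y = P y x :=
  le_antisymm (hP _ _ _ _ (add_comm x y) (min_comm x y).le)
    (hP _ _ _ _ (add_comm y x) (min_comm y x).le)

theorem AntidiagUnimodal.shiftMono (hP : AntidiagUnimodal P) : ShiftMono P :=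
  fun _ _ _ _ _ => hP _ _ _ _ (by ring) (by omega)

theorem ShiftMono.antidiagUnimodal_diagFold (hP : ShiftMono P) :
    AntidiagUnimodal (diagFold P) := by
  intro x y x' y' hsum hmin
  have := hP (max x y) (min x y) (min x' y' - min x y) (by omega) (by omega)
  unfold diagFold
  convert this using 2 <;> omega

theorem ShiftMono.sub_diagFold_nonneg (hP : ShiftMono P) : 0 ≤ P - diagFold P := by
  intro x y
  rcases le_total y x with h | h
  · simp [diagFold, max_eq_left h, min_eq_right h]
  · simpa [diagFold, max_eq_right h, min_eq_left h] using hP y x (y - x) (by omega) le_rfl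

theorem sub_diagFold_of_le {x y : ℤ} (h : y ≤ x) : (P - diagFold P) x y = 0 := by
  simp [diagFold, max_eq_left h, min_eq_right h]

theorem QuadrantSupported.diagFold (hP : QuadrantSupported P) :
    QuadrantSupported (diagFold P) :=
  fun _ _ _ => hP _ _ (Or.inr (by omega))

theorem QuadrantSupported.sub (hP : QuadrantSupported P) (hQ : QuadrantSupported Q) :
    QuadrantSupported (P - Q) :=
  fun x y h => by simp [hP x y h, hQ x y h]

theorem conv2_eq_sum_of_subset (hP : QuadrantSupported P) (hQ : QuadrantSupported Q)
    {X Y : ℤ} {B : Finset (ℤ × ℤ)} (hB : Icc 0 X ×ˢ Icc 0 Y ⊆ B) :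
    conv2 P Q X Y = ∑ p ∈ B, P p.1 p.2 * Q (X - p.1) (Y - p.2) := by
  refine sum_subset hB fun p _ hp => ?_
  simp only [mem_product, mem_Icc] at hp
  by_cases h : p.1 < 0 ∨ p.2 < 0
  · rw [hP _ _ h, zero_mul]
  · rw [hQ _ _ (by omega), mul_zero]

theorem conv2_comm (P Q : ℤ → ℤ → ℝ) : conv2 P Q = conv2 Q P := by
  ext X Y
  refine sum_nbij' (fun p => (X - p.1, Y - p.2)) (fun p => (X - p.1, Y - p.2))
    ?_ ?_ (by simp) (by simp) (by simp [mul_comm])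
  all_goals intro p hp; simp only [mem_product, mem_Icc] at hp ⊢; omega

theorem conv2_swap (hP : AntidiagUnimodal P) (hQ : AntidiagUnimodal Q) (X Y : ℤ) :
    conv2 P Q X Y = conv2 P Q Y X := by
  refine sum_nbij' Prod.swap Prod.swap ?_ ?_ (by simp) (by simp)
    fun p _ => by rw [Prod.fst_swap, Prod.snd_swap, hP.symm, hQ.symm]
  all_goals
    intro p hp
    simp only [mem_product, mem_Icc, Prod.fst_swap, Prod.snd_swap] at hp ⊢
    omega

theorem conv2_add_left : conv2 (P + Q) K = conv2 P K + conv2 Q K := by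
  ext X Y
  simp [conv2, add_mul, sum_add_distrib]

theorem conv2_add_right : conv2 K (P + Q) = conv2 K P + conv2 K Q := by
  rw [conv2_comm, conv2_add_left, conv2_comm P, conv2_comm Q]

theorem conv2_nonneg (hP : 0 ≤ P) (hQ : 0 ≤ Q) : 0 ≤ conv2 P Q :=
  fun _ _ => sum_nonneg fun _ _ => mul_nonneg (hP _ _) (hQ _ _)

theorem conv2_of_neg {X Y : ℤ} (hY : Y < 0) : conv2 P Q X Y = 0 := by
  simp [conv2, Icc_eq_empty_of_lt hY]

theorem antidiagUnimodal_of_step {T : ℤ → ℤ → ℝ} (hsymm : ∀ x y, T x y = T y x)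
    (hstep : ∀ x y, y + 2 ≤ x → T x y ≤ T (x - 1) (y + 1)) : AntidiagUnimodal T := by
  have chain (n : ℕ) : ∀ x y : ℤ, y + 2 * n ≤ x → T x y ≤ T (x - n) (y + n) := by
    induction n with
    | zero => simp
    | succ n ih =>
      intro x y h
      calc T x y ≤ T (x - n) (y + n) := ih x y (by omega)
        _ ≤ T (x - n - 1) (y + n + 1) := hstep _ _ (by omega)
        _ = T (x - ↑(n + 1)) (y + ↑(n + 1)) := by push_cast; congr 1 <;> ring
  have fold (x y : ℤ) : T x y = T (max x y) (min x y) := by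
    rcases le_total y x with h | h
    · rw [max_eq_left h, min_eq_right h]
    · rw [max_eq_right h, min_eq_left h, hsymm]
  intro x y x' y' hsum hmin
  rw [fold x y, fold x' y']
  convert chain (min x' y' - min x y).toNat (max x y) (min x y) (by omega) using 2 <;> omega

/-- The reflection `σ` across the line `a - c = X - 1 - Y` exchanges the two convolution sums,
and on each side of that line the two factors of
`(P p - P (σ p)) * (Q ((X - 1, Y + 1) - p) - Q ((X, Y) - p))` have the same sign. -/
theorem conv2_le_conv2_sub_one_add_one (hP : AntidiagUnimodal P) (hQ : AntidiagUnimodal Q)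
    (hPs : QuadrantSupported P) (hQs : QuadrantSupported Q) {X Y : ℤ} (hY : 0 ≤ Y)
    (hXY : Y + 2 ≤ X) : conv2 P Q X Y ≤ conv2 P Q (X - 1) (Y + 1) := by
  set D := X - 1 - Y with hD
  set B := Icc 0 (X + Y + D) ×ˢ Icc (-D) (X + Y) with hB
  set σ : ℤ × ℤ → ℤ × ℤ := fun p => (p.2 + D, p.1 - D) with hσ
  set G₀ : ℤ × ℤ → ℝ := fun p => Q (X - p.1) (Y - p.2) with hG₀
  set G₁ : ℤ × ℤ → ℝ := fun p => Q (X - 1 - p.1) (Y + 1 - p.2) with hG₁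
  have hσB : ∀ p ∈ B, σ p ∈ B := by
    intro p hp; simp only [hB, hσ, mem_product, mem_Icc] at hp ⊢; omega
  have hσσ (p : ℤ × ℤ) : σ (σ p) = p := by simp [hσ]
  have reflect (G : ℤ × ℤ → ℝ) :
      ∑ p ∈ B, P (σ p).1 (σ p).2 * G p = ∑ p ∈ B, P p.1 p.2 * G (σ p) :=
    sum_nbij' σ σ hσB hσB (fun p _ => hσσ p) (fun p _ => hσσ p) fun p _ => by rw [hσσ]
  have hG₀σ (p : ℤ × ℤ) : G₀ (σ p) = G₁ p := by
    simp only [hG₀, hG₁, hσ]; rw [hQ.symm]; congr 1 <;> ring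
  have hG₁σ (p : ℤ × ℤ) : G₁ (σ p) = G₀ p := by
    simp only [hG₀, hG₁, hσ]; rw [hQ.symm]; congr 1 <;> ring
  have sign (p : ℤ × ℤ) : 0 ≤ (P p.1 p.2 - P (σ p).1 (σ p).2) * (G₁ p - G₀ p) := by
    obtain ⟨a, c⟩ := p
    simp only [hσ, hG₀, hG₁]
    rcases le_or_gt (a - c) D with h | h
    · exact mul_nonneg (sub_nonneg.2 (hP _ _ _ _ (by omega) (by omega)))
        (sub_nonneg.2 (hQ _ _ _ _ (by omega) (by omega)))
    · exact mul_nonneg_of_nonpos_of_nonpos (sub_nonpos.2 (hP _ _ _ _ (by omega) (by omega)))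
        (sub_nonpos.2 (hQ _ _ _ _ (by omega) (by omega)))
  have expand : ∑ p ∈ B, (P p.1 p.2 - P (σ p).1 (σ p).2) * (G₁ p - G₀ p) =
      2 * (∑ p ∈ B, P p.1 p.2 * G₁ p - ∑ p ∈ B, P p.1 p.2 * G₀ p) := by
    simp only [sub_mul, mul_sub, sum_sub_distrib, reflect, hG₀σ, hG₁σ]
    ring
  have hbox₀ : conv2 P Q X Y = ∑ p ∈ B, P p.1 p.2 * G₀ p :=
    conv2_eq_sum_of_subset hPs hQs fun p hp => by
      simp only [hB, mem_product, mem_Icc] at hp ⊢; omega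
  have hbox₁ : conv2 P Q (X - 1) (Y + 1) = ∑ p ∈ B, P p.1 p.2 * G₁ p := by
    rw [conv2_eq_sum_of_subset hPs hQs (B := B) fun p hp => by
      simp only [hB, mem_product, mem_Icc] at hp ⊢; omega]
  have := expand ▸ sum_nonneg fun p (_ : p ∈ B) => sign p
  linarith

theorem antidiagUnimodal_conv2 (hP : AntidiagUnimodal P) (hQ : AntidiagUnimodal Q)
    (hP0 : 0 ≤ P) (hQ0 : 0 ≤ Q) (hPs : QuadrantSupported P) (hQs : QuadrantSupported Q) :
    AntidiagUnimodal (conv2 P Q) := by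
  refine antidiagUnimodal_of_step (conv2_swap hP hQ) fun X Y hXY => ?_
  rcases lt_or_ge Y 0 with hY | hY
  · rw [conv2_of_neg hY]
    exact conv2_nonneg hP0 hQ0 _ _
  · exact conv2_le_conv2_sub_one_add_one hP hQ hPs hQs hY hXY

theorem shiftMono_conv2_of_eq_zero (hJ0 : 0 ≤ J) (hJ : ∀ x y, y ≤ x → J x y = 0)
    (hQ : AntidiagUnimodal Q) (hJs : QuadrantSupported J) (hQs : QuadrantSupported Q) :
    ShiftMono (conv2 J Q) := by
  intro X Y k hk hkXY
  have hB {X' Y' : ℤ} (h₁ : X' ≤ X) (h₂ : Y' ≤ Y + k) :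
      Icc 0 X' ×ˢ Icc 0 Y' ⊆ Icc 0 X ×ˢ Icc 0 (Y + k) := fun p hp => by
    simp only [mem_product, mem_Icc] at hp ⊢
    omega
  rw [conv2_eq_sum_of_subset hJs hQs (hB le_rfl (by omega)),
    conv2_eq_sum_of_subset hJs hQs (hB (by omega) le_rfl)]
  refine sum_le_sum fun p _ => ?_
  rcases le_or_gt p.2 p.1 with h | h
  · simp [hJ _ _ h]
  · exact mul_le_mul_of_nonneg_left (hQ _ _ _ _ (by ring) (by omega)) (hJ0 _ _)

theorem conv2_eq_zero_of_le (hJ : ∀ x y, y ≤ x → J x y = 0) (hK : ∀ x y, y ≤ x → K x y = 0)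
    {X Y : ℤ} (hXY : Y ≤ X) : conv2 J K X Y = 0 :=
  sum_eq_zero fun p _ => by
    rcases le_or_gt p.2 p.1 with h | h
    · rw [hJ _ _ h, zero_mul]
    · rw [hK _ _ (by omega), mul_zero]

theorem shiftMono_conv2 (hP : ShiftMono P) (hQ : ShiftMono Q) (hP0 : 0 ≤ P) (hQ0 : 0 ≤ Q)
    (hPs : QuadrantSupported P) (hQs : QuadrantSupported Q) : ShiftMono (conv2 P Q) := by
  set M := diagFold P
  set N := diagFold Q
  have hdecomp : conv2 P Q =
      conv2 M N + conv2 (Q - N) M + (conv2 (P - M) N + conv2 (P - M) (Q - N)) := by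
    conv_lhs => rw [← add_sub_cancel M P, ← add_sub_cancel N Q]
    rw [conv2_add_left, conv2_add_right, conv2_add_right, conv2_comm M (Q - N)]
  have hM := hP.antidiagUnimodal_diagFold
  have hN := hQ.antidiagUnimodal_diagFold
  have hM0 : 0 ≤ M := fun x y => hP0 (max x y) (min x y)
  have hN0 : 0 ≤ N := fun x y => hQ0 (max x y) (min x y)
  have hJ : ∀ x y, y ≤ x → (P - M) x y = 0 := fun _ _ => sub_diagFold_of_le
  have hK : ∀ x y, y ≤ x → (Q - N) x y = 0 := fun _ _ => sub_diagFold_of_le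
  have hMN : ShiftMono (conv2 M N) :=
    (antidiagUnimodal_conv2 hM hN hM0 hN0 hPs.diagFold hQs.diagFold).shiftMono
  have hKM : ShiftMono (conv2 (Q - N) M) :=
    shiftMono_conv2_of_eq_zero hQ.sub_diagFold_nonneg hK hM (hQs.sub hQs.diagFold) hPs.diagFold
  have hJN : ShiftMono (conv2 (P - M) N) :=
    shiftMono_conv2_of_eq_zero hP.sub_diagFold_nonneg hJ hN (hPs.sub hPs.diagFold) hQs.diagFold
  have hJK : ShiftMono (conv2 (P - M) (Q - N)) :=
    shiftMono_of_eq_zero (conv2_nonneg hP.sub_diagFold_nonneg hQ.sub_diagFold_nonneg)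
      fun _ _ => conv2_eq_zero_of_le hJ hK
  rw [hdecomp]
  exact (hMN.add hKM).add (hJN.add hJK)

end Quadrant

section Sequences

variable {p q : ℕ → ℝ}

noncomputable def zeroExtend (p : ℕ → ℝ) (x : ℤ) : ℝ :=
  if 0 ≤ x then p x.toNat else 0

@[simp]
theorem zeroExtend_natCast (p : ℕ → ℝ) (n : ℕ) : zeroExtend p n = p n := by
  simp [zeroExtend]

theorem zeroExtend_of_neg {x : ℤ} (hx : x < 0) : zeroExtend p x = 0 :=
  if_neg (by omega)

theorem zeroExtend_nonneg (hp : 0 ≤ p) : 0 ≤ zeroExtend p :=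
  fun _ => ite_nonneg (hp _) le_rfl

theorem lrup_iff_shiftMono (hp : 0 ≤ p) (hq : 0 ≤ q) :
    LRup p q ↔ ShiftMono fun x y => zeroExtend p x * zeroExtend q y := by
  constructor
  · intro h x y k hk hkxy
    dsimp only
    rcases lt_or_ge y 0 with hy | hy
    · rw [zeroExtend_of_neg hy, mul_zero]
      exact mul_nonneg (zeroExtend_nonneg hp _) (zeroExtend_nonneg hq _)
    · lift y to ℕ using hy
      lift k to ℕ using hk
      obtain ⟨l, rfl⟩ : ∃ l : ℕ, x = (y + k + l : ℕ) := ⟨(x - y - k).toNat, by omega⟩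
      rw [show ((y + k + l : ℕ) : ℤ) - k = (y + l : ℕ) by push_cast; ring, ← Nat.cast_add]
      simp only [zeroExtend_natCast]
      exact h y k l
  · intro h i k l
    have := h (i + k + l : ℕ) i k (by positivity) (by omega)
    rw [show ((i + k + l : ℕ) : ℤ) - k = (i + l : ℕ) by push_cast; ring, ← Nat.cast_add] at this
    simpa only [zeroExtend_natCast] using this

theorem sum_Icc_zeroExtend_coeff_mul (φ ψ : ℝ⟦X⟧) (z : ℤ) :
    ∑ a ∈ Icc 0 z, zeroExtend (coeff · φ) a * zeroExtend (coeff · ψ) (z - a) =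
      zeroExtend (coeff · (φ * ψ)) z := by
  rcases lt_or_ge z 0 with hz | hz
  · rw [Icc_eq_empty_of_lt hz, sum_empty, zeroExtend_of_neg hz]
  · lift z to ℕ using hz
    rw [zeroExtend_natCast, coeff_mul, Nat.sum_antidiagonal_eq_sum_range_succ
      (fun i j => coeff i φ * coeff j ψ), Int.Icc_eq_finset_map, sum_map]
    refine sum_congr (by simp) fun i hi => ?_
    rw [mem_range] at hi
    simp [← Nat.cast_sub (by omega : i ≤ z)]

theorem conv2_zeroExtend_coeff (φ₁ φ₂ ψ₁ ψ₂ : ℝ⟦X⟧) :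
    conv2 (fun x y => zeroExtend (coeff · φ₁) x * zeroExtend (coeff · φ₂) y)
        (fun x y => zeroExtend (coeff · ψ₁) x * zeroExtend (coeff · ψ₂) y) =
      fun x y => zeroExtend (coeff · (φ₁ * ψ₁)) x * zeroExtend (coeff · (φ₂ * ψ₂)) y := by
  ext x y
  rw [← sum_Icc_zeroExtend_coeff_mul, ← sum_Icc_zeroExtend_coeff_mul, sum_mul_sum, conv2,
    sum_product]
  exact sum_congr rfl fun _ _ => sum_congr rfl fun _ _ => by ring

end Sequences

section PowerSeries

variable {φ₁ φ₂ ψ₁ ψ₂ : ℝ⟦X⟧}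

theorem coeff_mul_nonneg (hφ : ∀ n, 0 ≤ coeff n φ₁) (hψ : ∀ n, 0 ≤ coeff n ψ₁) (n : ℕ) :
    0 ≤ coeff n (φ₁ * ψ₁) := by
  rw [coeff_mul]
  exact sum_nonneg fun _ _ => mul_nonneg (hφ _) (hψ _)

theorem coeff_prod_nonneg {ι : Type*} {s : Finset ι} {φ : ι → ℝ⟦X⟧}
    (hφ : ∀ i ∈ s, ∀ n, 0 ≤ coeff n (φ i)) (n : ℕ) : 0 ≤ coeff n (∏ i ∈ s, φ i) :=
  prod_induction φ (fun ψ => ∀ n, 0 ≤ coeff n ψ) (fun _ _ => coeff_mul_nonneg)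
    (fun n => by rw [coeff_one]; split_ifs <;> norm_num) hφ n

theorem lrup_coeff_one : LRup (coeff · (1 : ℝ⟦X⟧)) (coeff · 1) := by
  intro i k l
  simp only [coeff_one]
  split_ifs <;> norm_num <;> omega

theorem LRup.coeff_mul (hφ₁ : ∀ n, 0 ≤ coeff n φ₁) (hφ₂ : ∀ n, 0 ≤ coeff n φ₂)
    (hψ₁ : ∀ n, 0 ≤ coeff n ψ₁) (hψ₂ : ∀ n, 0 ≤ coeff n ψ₂)
    (hφ : LRup (coeff · φ₁) (coeff · φ₂)) (hψ : LRup (coeff · ψ₁) (coeff · ψ₂)) :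
    LRup (coeff · (φ₁ * ψ₁)) (coeff · (φ₂ * ψ₂)) := by
  rw [lrup_iff_shiftMono hφ₁ hφ₂] at hφ
  rw [lrup_iff_shiftMono hψ₁ hψ₂] at hψ
  rw [lrup_iff_shiftMono (coeff_mul_nonneg hφ₁ hψ₁) (coeff_mul_nonneg hφ₂ hψ₂),
    ← conv2_zeroExtend_coeff]
  refine shiftMono_conv2 hφ hψ ?_ ?_ ?_ ?_
  · exact fun x y => mul_nonneg (zeroExtend_nonneg hφ₁ x) (zeroExtend_nonneg hφ₂ y)
  · exact fun x y => mul_nonneg (zeroExtend_nonneg hψ₁ x) (zeroExtend_nonneg hψ₂ y)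
  all_goals
    rintro x y (h | h) <;> simp [zeroExtend_of_neg h]

theorem LRup.coeff_prod {ι : Type*} [DecidableEq ι] (s : Finset ι) {φ ψ : ι → ℝ⟦X⟧}
    (hφ : ∀ i, ∀ n, 0 ≤ coeff n (φ i)) (hψ : ∀ i, ∀ n, 0 ≤ coeff n (ψ i))
    (h : ∀ i, LRup (coeff · (φ i)) (coeff · (ψ i))) :
    LRup (coeff · (∏ i ∈ s, φ i)) (coeff · (∏ i ∈ s, ψ i)) := by
  induction s using Finset.induction_on with
  | empty => simpa using lrup_coeff_one
  | insert j s hj ih =>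
    rw [prod_insert hj, prod_insert hj]
    exact (h j).coeff_mul (hφ j) (hψ j) (coeff_prod_nonneg fun i _ => hφ i)
      (coeff_prod_nonneg fun i _ => hψ i) ih

end PowerSeries

section BP

variable {p q : ℕ → ℝ}

theorem LRup.reflect (h : LRup p q) (hp : 0 ≤ p) (hq : 0 ≤ q) (b : ℕ) :
    LRup (fun x => if x ≤ b then q (b - x) else 0) (fun x => if x ≤ b then p (b - x) else 0) := by
  intro i k l
  dsimp only
  by_cases hb : i + k + l ≤ b
  · simp only [if_pos hb, if_pos (by omega : i ≤ b), if_pos (by omega : i + l ≤ b),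
      if_pos (by omega : i + k ≤ b)]
    have := h (b - (i + k + l)) k l
    rw [show b - (i + k + l) + k + l = b - i by omega,
      show b - (i + k + l) + l = b - (i + k) by omega,
      show b - (i + k + l) + k = b - (i + l) by omega] at this
    linarith
  · rw [if_neg hb, zero_mul]
    exact mul_nonneg (ite_nonneg (hq _) le_rfl) (ite_nonneg (hp _) le_rfl)

theorem LRup.truncate (h : LRup p q) (hp : 0 ≤ p) (hq : 0 ≤ q) (c : ℕ) :
    LRup (fun x => if x ≤ c then p x else 0) (fun x => if x ≤ c then q x else 0) := by
  intro i k l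
  dsimp only
  by_cases hc : i + k + l ≤ c
  · simp only [if_pos hc, if_pos (by omega : i ≤ c), if_pos (by omega : i + l ≤ c),
      if_pos (by omega : i + k ≤ c)]
    exact h i k l
  · rw [if_neg hc, zero_mul]
    exact mul_nonneg (ite_nonneg (hp _) le_rfl) (ite_nonneg (hq _) le_rfl)

theorem LRup.div_const (h : LRup p q) {α β : ℝ} (hα : 0 ≤ α) (hβ : 0 ≤ β) :
    LRup (fun x => p x / α) (fun x => q x / β) := by
  intro i k l
  rw [div_mul_div_comm, div_mul_div_comm]
  exact div_le_div_of_nonneg_right (h i k l) (mul_nonneg hα hβ)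

variable {ι : Type*} [Fintype ι]

theorem coeff_prod_mk [DecidableEq ι] (m : ι → ℕ → ℝ) (n : ℕ) :
    coeff n (∏ i, mk (m i)) = ∑ y ∈ piAntidiag univ n, ∏ i, m i (y i) := by
  rw [coeff_prod, finsuppAntidiag, sum_map]
  simpa [coeff_mk] using sum_attach _ fun y : ι → ℕ => ∏ i, m i (y i)

theorem Rnum_eq_sum_range [DecidableEq ι] (b : ℕ) (m : ι → ℕ → ℝ) (x : ℕ) :
    Rnum b m x = ∑ n ∈ range (b + 1 - x), coeff n (∏ i, mk (m i)) := by
  have hdisj : (range (b + 1 - x) : Set ℕ).PairwiseDisjoint (piAntidiag (univ : Finset ι)) :=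
    fun n _ n' _ hne => disjoint_left.2 fun y hy hy' =>
      hne ((mem_piAntidiag.1 hy).1.symm.trans (mem_piAntidiag.1 hy').1)
  have hmem (y : ι → ℕ) :
      y ∈ (range (b + 1 - x)).biUnion (piAntidiag univ) ↔ ∑ i, y i + x ≤ b := by
    simp only [mem_biUnion, mem_range, mem_piAntidiag, mem_univ, implies_true, and_true,
      exists_eq_right']
    exact Nat.lt_sub_iff_add_lt.trans Nat.lt_succ_iff
  simp_rw [coeff_prod_mk]
  rw [← sum_biUnion hdisj, Rnum, tsum_eq_sum fun y hy => if_neg (mt (hmem y).2 hy)]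
  exact sum_congr rfl fun y hy => if_pos ((hmem y).1 hy)

/-- As `mk 1 = (1 - X)⁻¹`, the coefficients are the partial sums `∑_{|y| ≤ z} ∏ᵢ mᵢ(yᵢ)`. -/
noncomputable def cdfSeries (m : ι → ℕ → ℝ) : ℝ⟦X⟧ :=
  (∏ i, mk (m i)) * mk (1 : ℕ → ℝ)

theorem Rnum_eq_s17 (b : ℕ) (m : ι → ℕ → ℝ) (x : ℕ) :
    Rnum b m x = if x ≤ b then coeff (b - x) (cdfSeries m) else 0 := by
  classical
  rw [Rnum_eq_sum_range]
  split_ifs with h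
  · rw [cdfSeries, coeff_mul, Nat.sum_antidiagonal_eq_sum_range_succ
      (fun i j => coeff i _ * coeff j (mk (1 : ℕ → ℝ))), show b + 1 - x = (b - x).succ by omega]
    simp [coeff_mk]
  · rw [show b + 1 - x = 0 by omega, range_zero, sum_empty]

theorem Rnum_nonneg {m : ι → ℕ → ℝ} (hm : ∀ i, 0 ≤ m i) (b : ℕ) : 0 ≤ Rnum b m :=
  fun _ => tsum_nonneg fun _ => ite_nonneg (prod_nonneg fun i _ => hm i _) le_rfl

theorem coeff_cdfSeries_nonneg {m : ι → ℕ → ℝ} (hm : ∀ i, 0 ≤ m i) (n : ℕ) :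
    0 ≤ coeff n (cdfSeries m) :=
  coeff_mul_nonneg (coeff_prod_nonneg fun i _ n => by simpa using hm i n) (by simp) n

theorem lrup_coeff_cdfSeries {m₁ m₂ : ι → ℕ → ℝ} (hm₁ : ∀ i, 0 ≤ m₁ i) (hm₂ : ∀ i, 0 ≤ m₂ i)
    (h : ∀ i, LRup (m₁ i) (m₂ i)) : LRup (coeff · (cdfSeries m₁)) (coeff · (cdfSeries m₂)) := by
  classical
  have hmk {m : ι → ℕ → ℝ} (hm : ∀ i, 0 ≤ m i) (i : ι) (n : ℕ) : 0 ≤ coeff n (mk (m i)) := by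
    simpa using hm i n
  have hone (n : ℕ) : 0 ≤ coeff n (mk (1 : ℕ → ℝ)) := by simp
  exact (LRup.coeff_prod univ (hmk hm₁) (hmk hm₂) fun i => by simpa using h i).coeff_mul
    (coeff_prod_nonneg fun i _ => hmk hm₁ i) (coeff_prod_nonneg fun i _ => hmk hm₂ i) hone hone
    fun _ _ _ => by simp [coeff_mk]

theorem lrup_Rnum {m₁ m₂ : ι → ℕ → ℝ} (hm₁ : ∀ i, 0 ≤ m₁ i) (hm₂ : ∀ i, 0 ≤ m₂ i)
    (h : ∀ i, LRup (m₁ i) (m₂ i)) (b : ℕ) : LRup (Rnum b m₂) (Rnum b m₁) := by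
  rw [show Rnum b m₁ = _ from funext (Rnum_eq_s17 b m₁), show Rnum b m₂ = _ from funext (Rnum_eq_s17 b m₂)]
  exact (lrup_coeff_cdfSeries hm₁ hm₂ h).reflect (coeff_cdfSeries_nonneg hm₁)
    (coeff_cdfSeries_nonneg hm₂) b

end BP

theorem Rop_antitone_general {ι : Type*} [Fintype ι] (b c : ℕ) (m₁ m₂ : ι → ℕ → ℝ)
    (h₁ : ∀ i, IsDist (m₁ i)) (h₂ : ∀ i, IsDist (m₂ i))
    (h : ∀ i, LRup (m₁ i) (m₂ i)) :
    LRup (Rop b c m₂) (Rop b c m₁) := by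
  have hm₁ : ∀ i, 0 ≤ m₁ i := fun i => (h₁ i).1
  have hm₂ : ∀ i, 0 ≤ m₂ i := fun i => (h₂ i).1
  exact ((lrup_Rnum hm₁ hm₂ h b).truncate (Rnum_nonneg hm₂ b) (Rnum_nonneg hm₁ b) c).div_const
    (sum_nonneg fun t _ => Rnum_nonneg hm₂ b t) (sum_nonneg fun t _ => Rnum_nonneg hm₁ b t)

theorem Rop_antitone {ι : Type*} [Fintype ι] (b c : ℕ) (m₁ m₂ : ι → ℕ → ℝ)
    (h₁ : ∀ i, IsDist (m₁ i)) (h₂ : ∀ i, IsDist (m₂ i))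
    (h₁0 : ∀ i, 0 < m₁ i 0) (h₂0 : ∀ i, 0 < m₂ i 0)
    (h : ∀ i, LRup (m₁ i) (m₂ i)) :
    LRup (Rop b c m₂) (Rop b c m₁) :=
  Rop_antitone_general b c m₁ m₂ h₁ h₂ h
end

section
/- If all inputs m_i to the local BP operator R are log-concave finitely supported probability distributions on ℕ with 0 in their supports, then the output R[m] is log-concave, where R[m](x) = 1(x ≤ c)·Σ_{|y| ≤ b−x} Π_i m_i(y_i) / Σ_{t ≤ c} Σ_{|y| ≤ b−t} Π_i m_i(y_i). -/
/-!
`Rnum b m x` is the probability that `Y₁ + ⋯ + Yₙ ≤ b - x` for independent `Yᵢ ∼ mᵢ`, i.e. the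
distribution function `G` of the sum evaluated at `b - x`. Call `f : ℤ → ℝ` PF₂ if it is
nonnegative and `f a * f d ≤ f b * f c` whenever `a ≤ b, c` and `a + d = b + c`; for nonnegative
sequences this is log-concavity without internal zeros. The indicator of `[0, ∞)` is PF₂, and
convolving with a finitely supported PF₂ sequence preserves PF₂ by the four functions theorem,
so `G` is PF₂. Reflection `t ↦ b - t`, truncation to `t ≤ c` and normalisation preserve PF₂, and a
PF₂ sequence restricted to `ℕ` is log-concave.
-/

open Function

def IsPF2 (f : ℤ → ℝ) : Prop :=
  (∀ t, 0 ≤ f t) ∧ ∀ a b c d : ℤ, a ≤ b → a ≤ c → a + d = b + c → f a * f d ≤ f b * f c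

namespace IsPF2

variable {f : ℤ → ℝ}

lemma one : IsPF2 1 :=
  ⟨fun _ => zero_le_one, fun _ _ _ _ _ _ _ => le_rfl⟩

lemma indicator (hf : IsPF2 f) {s : Set ℤ} (hs : s.OrdConnected) : IsPF2 (s.indicator f) := by
  refine ⟨Set.indicator_nonneg fun t _ => hf.1 t, fun a b c d hab hac hsum => ?_⟩
  by_cases hmem : a ∈ s ∧ d ∈ s
  · have hb : b ∈ s := hs.out hmem.1 hmem.2 ⟨hab, by omega⟩
    have hc : c ∈ s := hs.out hmem.1 hmem.2 ⟨hac, by omega⟩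
    simpa only [Set.indicator_of_mem hmem.1, Set.indicator_of_mem hmem.2,
      Set.indicator_of_mem hb, Set.indicator_of_mem hc] using hf.2 a b c d hab hac hsum
  · have : s.indicator f a * s.indicator f d = 0 := by
      rw [not_and_or] at hmem
      rcases hmem with h | h <;> simp [Set.indicator_of_notMem h]
    rw [this]
    exact mul_nonneg (Set.indicator_nonneg (fun t _ => hf.1 t) b)
      (Set.indicator_nonneg (fun t _ => hf.1 t) c)

lemma comp_const_sub (hf : IsPF2 f) (b : ℤ) : IsPF2 fun t => f (b - t) := by
  refine ⟨fun t => hf.1 _, fun a b' c d hab hac hsum => ?_⟩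
  rw [mul_comm (f _)]
  exact hf.2 _ _ _ _ (by omega) (by omega) (by omega)

lemma div_const (hf : IsPF2 f) {Z : ℝ} (hZ : 0 ≤ Z) : IsPF2 fun t => f t / Z := by
  refine ⟨fun t => div_nonneg (hf.1 t) hZ, fun a b c d hab hac hsum => ?_⟩
  simp only [div_mul_div_comm]
  exact div_le_div_of_nonneg_right (hf.2 a b c d hab hac hsum) (mul_nonneg hZ hZ)

lemma logConcave_comp_natCast (hf : IsPF2 f) : LogConcave fun n : ℕ => f n := by
  refine ⟨fun i j k hij hjk hi hk hj => ?_, fun i => ?_⟩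
  · dsimp only at hi hk hj
    have hpos : 0 < f i * f k := (mul_nonneg (hf.1 _) (hf.1 _)).lt_of_ne' (mul_ne_zero hi hk)
    have := hf.2 i j (i + k - j) k (by omega) (by omega) (by ring)
    rw [hj, zero_mul] at this
    linarith
  · push_cast
    simpa [sq, add_assoc] using hf.2 i (i + 1) (i + 1) (i + 2) (by omega) (by omega) (by ring)

end IsPF2

section LocalToGlobal

variable {f : ℤ → ℝ} (hloc : ∀ i, f i * f (i + 2) ≤ f (i + 1) ^ 2)
include hloc

lemma mul_add_one_le_add_one_mul {a d : ℤ} (had : a ≤ d) (hpos : ∀ j, a ≤ j → j ≤ d → 0 < f j) :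
    f a * f (d + 1) ≤ f (a + 1) * f d := by
  induction d, had using Int.leInduction with
  | base => rw [mul_comm]
  | succ d had ih =>
    have hd : 0 < f d := hpos d had (by omega)
    have ih := ih fun j hj hjd => hpos j hj (by omega)
    refine le_of_mul_le_mul_left ?_ hd
    calc f d * (f a * f (d + 1 + 1)) = f a * (f d * f (d + 2)) := by ring_nf
      _ ≤ f a * f (d + 1) ^ 2 := mul_le_mul_of_nonneg_left (hloc d) (hpos a le_rfl (by omega)).le
      _ = (f a * f (d + 1)) * f (d + 1) := by ring
      _ ≤ (f (a + 1) * f d) * f (d + 1) :=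
        mul_le_mul_of_nonneg_right ih (hpos _ (by omega) le_rfl).le
      _ = f d * (f (a + 1) * f (d + 1)) := by ring

lemma mul_le_mul_add_sub_of_pos {a b d : ℤ} (hab : a ≤ b) (hbd : b ≤ a + d - b)
    (hpos : ∀ j, a ≤ j → j ≤ d → 0 < f j) : f a * f d ≤ f b * f (a + d - b) := by
  induction b, hab using Int.leInduction with
  | base => simp
  | succ b hab ih =>
    calc f a * f d ≤ f b * f (a + d - b) := ih (by omega)
      _ = f b * f (a + d - (b + 1) + 1) := by ring_nf
      _ ≤ f (b + 1) * f (a + d - (b + 1)) :=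
        mul_add_one_le_add_one_mul hloc (by omega) fun j hj hjd => hpos j (by omega) (by omega)

lemma IsPF2.of_mul_le_sq (hnn : ∀ t, 0 ≤ f t)
    (hsupp : ∀ i j k : ℤ, i ≤ j → j ≤ k → f i ≠ 0 → f k ≠ 0 → f j ≠ 0) : IsPF2 f := by
  refine ⟨hnn, ?_⟩
  suffices h : ∀ a b c d, a ≤ b → b ≤ c → a + d = b + c → f a * f d ≤ f b * f c by
    intro a b c d hab hac hsum
    rcases le_total b c with hbc | hcb
    · exact h a b c d hab hbc hsum
    · rw [mul_comm (f b)]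
      exact h a c b d hac hcb (by omega)
  intro a b c d hab hbc hsum
  by_cases ha : f a = 0
  · simpa [ha] using mul_nonneg (hnn b) (hnn c)
  by_cases hd : f d = 0
  · simpa [hd] using mul_nonneg (hnn b) (hnn c)
  have hpos : ∀ j, a ≤ j → j ≤ d → 0 < f j := fun j haj hjd =>
    (hnn j).lt_of_ne' (hsupp a j d haj hjd ha hd)
  have hc : c = a + d - b := by omega
  rw [hc]
  exact mul_le_mul_add_sub_of_pos hloc hab (by omega) hpos

end LocalToGlobal

lemma extend_natCast_of_neg (p : ℕ → ℝ) {t : ℤ} (ht : t < 0) : extend ((↑) : ℕ → ℤ) p 0 t = 0 :=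
  extend_apply' _ _ _ fun ⟨n, hn⟩ => by omega

lemma isPF2_extend_natCast {p : ℕ → ℝ} (hnn : ∀ n, 0 ≤ p n) (hp : LogConcave p) :
    IsPF2 (extend ((↑) : ℕ → ℤ) p 0) := by
  have hcast (n : ℕ) : extend ((↑) : ℕ → ℤ) p 0 n = p n := Nat.cast_injective.extend_apply _ _ _
  refine IsPF2.of_mul_le_sq (fun i => ?_) (fun t => ?_) (fun i j k hij hjk hi hk => ?_)
  · rcases lt_or_ge i 0 with hi | hi
    · simp [extend_natCast_of_neg p hi, sq_nonneg]
    lift i to ℕ using hi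
    have := hp.2 i
    rw [← hcast i, ← hcast (i + 1), ← hcast (i + 2)] at this
    push_cast at this
    exact this
  · rcases lt_or_ge t 0 with ht | ht
    · rw [extend_natCast_of_neg p ht]
    lift t to ℕ using ht
    rw [hcast]; exact hnn t
  · have hi0 : 0 ≤ i := not_lt.1 fun h => hi (extend_natCast_of_neg p h)
    lift i to ℕ using hi0
    lift j to ℕ using by omega
    lift k to ℕ using by omega
    rw [hcast] at hi hk ⊢
    exact hp.1 i j k (by omega) (by omega) hi hk

noncomputable def intConv (f g : ℤ → ℝ) (t : ℤ) : ℝ :=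
  ∑' k, f k * g (t - k)

lemma intConv_eq_tsum_shift (f g : ℤ → ℝ) (t s : ℤ) :
    intConv f g t = ∑' k, f (k - s) * g (t + s - k) := by
  rw [intConv, ← (Equiv.subRight s).tsum_eq]
  congr! 2 with k
  simp only [Equiv.subRight_apply]
  ring_nf

lemma isPF2_intConv {f g : ℤ → ℝ} (hf : IsPF2 f) (hg : IsPF2 g) (hfin : (support f).Finite) :
    IsPF2 (intConv f g) := by
  refine ⟨fun t => tsum_nonneg fun k => mul_nonneg (hf.1 k) (hg.1 _), ?_⟩
  intro a b c d hab hac hsum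
  set s := b - a
  set U := hfin.toFinset ∪ hfin.toFinset.image (· + s)
  have hfU : ∀ k ∉ U, f k = 0 := fun k hk => by
    by_contra h; exact hk (Finset.mem_union_left _ (hfin.mem_toFinset.2 h))
  have hfU' : ∀ k ∉ U, f (k - s) = 0 := fun k hk => by
    by_contra h
    exact hk (Finset.mem_union_right _ (Finset.mem_image.2 ⟨k - s, hfin.mem_toFinset.2 h, by ring⟩))
  have hb : intConv f g b = ∑ k ∈ U, f k * g (b - k) :=
    tsum_eq_sum fun k hk => by rw [hfU k hk, zero_mul]
  have hd : intConv f g d = ∑ k ∈ U, f k * g (d - k) :=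
    tsum_eq_sum fun k hk => by rw [hfU k hk, zero_mul]
  have ha : intConv f g a = ∑ k ∈ U, f (k - s) * g (b - k) := by
    rw [intConv_eq_tsum_shift f g a s, show a + s = b by omega]
    exact tsum_eq_sum fun k hk => by rw [hfU' k hk, zero_mul]
  have hc : intConv f g c = ∑ k ∈ U, f (k - s) * g (d - k) := by
    rw [intConv_eq_tsum_shift f g c s, show c + s = d by omega]
    exact tsum_eq_sum fun k hk => by rw [hfU' k hk, zero_mul]
  rw [ha, hb, hc, hd]
  -- The four functions condition at `k ≤ l` is PF₂ of `f`, and at `l ≤ k` it is PF₂ of `g`.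
  have key := four_functions_theorem (fun k => f (k - s) * g (b - k)) (fun k => f k * g (d - k))
    (fun k => f k * g (b - k)) (fun k => f (k - s) * g (d - k))
    (fun k => mul_nonneg (hf.1 _) (hg.1 _)) (fun k => mul_nonneg (hf.1 _) (hg.1 _))
    (fun k => mul_nonneg (hf.1 _) (hg.1 _)) (fun k => mul_nonneg (hf.1 _) (hg.1 _)) ?_ U U
  · rwa [Finset.infs_self.2 (LinearOrder.infClosed _),
      Finset.sups_eq_self.2 (LinearOrder.supClosed _)] at key
  intro k l
  rcases le_total k l with hkl | hlk
  · simp only [inf_of_le_left hkl, sup_of_le_right hkl]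
    have := hf.2 (k - s) k (l - s) l (by omega) (by omega) (by ring)
    convert mul_le_mul_of_nonneg_right this (mul_nonneg (hg.1 (b - k)) (hg.1 (d - l))) using 1 <;>
      ring
  · simp only [inf_of_le_right hlk, sup_of_le_left hlk]
    have := hg.2 (b - k) (b - l) (d - k) (d - l) (by omega) (by omega) (by ring)
    convert mul_le_mul_of_nonneg_right this (mul_nonneg (hf.1 (k - s)) (hf.1 l)) using 1 <;>
      ring

noncomputable def sumCDF {ι : Type*} [Fintype ι] (m : ι → ℕ → ℝ) (t : ℤ) : ℝ :=
  ∑' y : ι → ℕ, if ∑ i, (y i : ℤ) ≤ t then ∏ i, m i (y i) else 0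

section sumCDF

variable {ι : Type*} [Fintype ι]

lemma summable_sumCDF_term {m : ι → ℕ → ℝ} (hfin : ∀ i, (support (m i)).Finite) (t : ℤ) :
    Summable fun y : ι → ℕ => if ∑ i, (y i : ℤ) ≤ t then ∏ i, m i (y i) else 0 := by
  refine summable_of_hasFiniteSupport ((Set.Finite.pi hfin).subset fun y hy i _ => ?_)
  contrapose! hy
  have hprod : ∏ j, m j (y j) = 0 := Finset.prod_eq_zero (Finset.mem_univ i) (notMem_support.1 hy)
  simp [hprod]

lemma sumCDF_comp_equiv {α β : Type*} [Fintype α] [Fintype β] (e : α ≃ β) (m : β → ℕ → ℝ) :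
    sumCDF (fun a => m (e a)) = sumCDF m := by
  ext t
  rw [sumCDF, sumCDF, ← (e.arrowCongr (Equiv.refl ℕ)).symm.tsum_eq]
  congr! 2 with y
  simp [e.sum_comp (fun b => (y b : ℤ)), e.prod_comp (fun b => m b (y b))]

lemma sumCDF_of_isEmpty [IsEmpty ι] (m : ι → ℕ → ℝ) : sumCDF m = (Set.Ici 0).indicator 1 := by
  ext t
  rw [sumCDF, tsum_eq_single isEmptyElim fun y hy => (hy (Subsingleton.elim _ _)).elim]
  by_cases ht : 0 ≤ t <;> simp [ht]

lemma sumCDF_option (M : Option ι → ℕ → ℝ) (hfin : ∀ i, (support (M i)).Finite) :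
    sumCDF M = intConv (extend ((↑) : ℕ → ℤ) (M none) 0) (sumCDF fun i => M (some i)) := by
  ext t
  have hsplit (j : ℕ) (y : ι → ℕ) :
      (if ∑ o, (((Equiv.piOptionEquivProd (β := fun _ => ℕ)).symm (j, y) o : ℕ) : ℤ) ≤ t then
        ∏ o, M o ((Equiv.piOptionEquivProd (β := fun _ => ℕ)).symm (j, y) o) else 0) =
      M none j * if ∑ i, (y i : ℤ) ≤ t - j then ∏ i, M (some i) (y i) else 0 := by
    rw [Fintype.sum_option, Fintype.prod_option]
    change (if (j : ℤ) + ∑ i, (y i : ℤ) ≤ t then M none j * ∏ i, M (some i) (y i) else 0) = _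
    by_cases h : (j : ℤ) + ∑ i, (y i : ℤ) ≤ t
    · rw [if_pos h, if_pos (by omega)]
    · rw [if_neg h, if_neg (by omega), mul_zero]
  have hsupp : support (fun k : ℤ => extend ((↑) : ℕ → ℤ) (M none) 0 k *
      sumCDF (fun i => M (some i)) (t - k)) ⊆ Set.range ((↑) : ℕ → ℤ) := fun k hk => by
    by_contra h
    exact hk (show extend _ _ _ k * _ = 0 by
      rw [extend_apply' _ _ _ fun hj => h hj, Pi.zero_apply, zero_mul])
  rw [intConv, ← Nat.cast_injective.tsum_eq hsupp, sumCDF,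
    ← (Equiv.piOptionEquivProd (β := fun _ => ℕ)).symm.tsum_eq]
  rw [Summable.tsum_prod]
  · congr! 1 with j
    simp only [hsplit, tsum_mul_left, Nat.cast_injective.extend_apply]
    rfl
  · exact (summable_sumCDF_term hfin t).comp_injective (Equiv.injective _)

end sumCDF

theorem isPF2_sumCDF {ι : Type*} [Fintype ι] (m : ι → ℕ → ℝ) (hnn : ∀ i n, 0 ≤ m i n)
    (hfin : ∀ i, (support (m i)).Finite) (hlc : ∀ i, LogConcave (m i)) : IsPF2 (sumCDF m) := by
  revert m
  refine Fintype.induction_empty_option (P := fun ι _ => ∀ m : ι → ℕ → ℝ, (∀ i n, 0 ≤ m i n) →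
    (∀ i, (support (m i)).Finite) → (∀ i, LogConcave (m i)) → IsPF2 (sumCDF m)) ?_ ?_ ?_ ι
  · intro α β _ e ih m hnn hfin hlc
    let : Fintype α := Fintype.ofEquiv β e.symm
    rw [← sumCDF_comp_equiv e]
    exact ih _ (fun a => hnn (e a)) (fun a => hfin (e a)) fun a => hlc (e a)
  · intro m _ _ _
    rw [sumCDF_of_isEmpty]
    exact IsPF2.one.indicator Set.ordConnected_Ici
  · intro α _ ih m hnn hfin hlc
    rw [sumCDF_option m hfin]
    refine isPF2_intConv (isPF2_extend_natCast (hnn none) (hlc none))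
      (ih _ (fun i => hnn (some i)) (fun i => hfin (some i)) fun i => hlc (some i)) ?_
    exact ((hfin none).image _).subset support_extend_zero_subset

lemma Rnum_eq_sumCDF {ι : Type*} [Fintype ι] (b : ℕ) (m : ι → ℕ → ℝ) (x : ℕ) :
    Rnum b m x = sumCDF m (b - x) := by
  refine tsum_congr fun y => ?_
  have hcast : ((∑ i, y i : ℕ) : ℤ) = ∑ i, (y i : ℤ) := Nat.cast_sum _ _
  congr 1
  apply propext
  omega

theorem Rop_logConcave_general {ι : Type*} [Fintype ι] (b c : ℕ) (m : ι → ℕ → ℝ)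
    (hdist : ∀ i, IsDist (m i))
    (hlc : ∀ i, LogConcave (m i)) :
    LogConcave (Rop b c m) := by
  have hG : IsPF2 (sumCDF m) :=
    isPF2_sumCDF m (fun i => (hdist i).1) (fun i => (hdist i).2.1) hlc
  set Z := ∑ t ∈ Finset.range (c + 1), Rnum b m t
  have hZ : 0 ≤ Z := Finset.sum_nonneg fun t _ => (Rnum_eq_sumCDF b m t).symm ▸ hG.1 _
  have hR := ((hG.comp_const_sub b).indicator (Set.ordConnected_Iic (a := (c : ℤ)))).div_const hZ
  convert hR.logConcave_comp_natCast using 2 with x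
  simp [Rop, Rnum_eq_sumCDF, Set.indicator, Z]

theorem Rop_logConcave {ι : Type*} [Fintype ι] (b c : ℕ) (m : ι → ℕ → ℝ)
    (hdist : ∀ i, IsDist (m i)) (h0 : ∀ i, 0 < m i 0)
    (hlc : ∀ i, LogConcave (m i)) :
    LogConcave (Rop b c m) :=
  Rop_logConcave_general b c m hdist hlc
end
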